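/- arXiv:1409.2237 — 3 statements merged into one kernel-verified Lean document; each statement's English description precedes it below -/
import Mathlib

section
/- For n ≥ 2, the ideal quantum correlator T : M_n(ℂ) → M_n(ℂ) ⊗ M_n(ℂ), defined by Tr[T(ρ)(A ⊗ B)] = Tr[A ρ B] for all A, B, is not Hermiticity-preserving: there exists a Hermitian matrix ρ such that T(ρ) is not Hermitian. -/
open Matrix Kronecker
open scoped ComplexOrder

noncomputable section

/-- The map `id_k ⊗ L` acting blockwise. -/
def tensorId {n m : ℕ} (L : Matrix (Fin n) (Fin n) ℂ → Matrix (Fin m) (Fin m) ℂ)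
    (k : ℕ) (X : Matrix (Fin k × Fin n) (Fin k × Fin n) ℂ) :
    Matrix (Fin k × Fin m) (Fin k × Fin m) ℂ :=
  Matrix.of fun p q => L (Matrix.of fun a b => X (p.1, a) (q.1, b)) p.2 q.2

/-- Complete positivity. -/
def IsCP {n m : ℕ} (L : Matrix (Fin n) (Fin n) ℂ → Matrix (Fin m) (Fin m) ℂ) : Prop :=
  ∀ (k : ℕ) (X : Matrix (Fin k × Fin n) (Fin k × Fin n) ℂ),
    X.PosSemidef → (tensorId L k X).PosSemidef

/-- Hermiticity preservation. -/
def IsHP {n m : ℕ} (L : Matrix (Fin n) (Fin n) ℂ → Matrix (Fin m) (Fin m) ℂ) : Prop :=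
  ∀ X, L Xᴴ = (L X)ᴴ

/-- Partial trace over the second tensor factor. -/
def ptrace2 {m d : ℕ} (X : Matrix (Fin m × Fin d) (Fin m × Fin d) ℂ) :
    Matrix (Fin m) (Fin m) ℂ :=
  Matrix.of fun i j => ∑ a, X (i, a) (j, a)

/-!
The entry of `∑ i j, (E_ij ρ) ⊗ E_ji` at `((a, b), (c, d))` is `ρ b c` if `a = d` and `0`
otherwise.
Comparing the entries at `((j, i), (i, j))` and `((i, j), (j, i))`, Hermiticity of this matrix
forces `ρ i i = conj (ρ j j)` for all `i, j`, which fails for the Hermitian matrix `E_ii`.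
-/

namespace Matrix

variable {ι R : Type*} [DecidableEq ι]

theorem isHermitian_single_one_self [Semiring R] [StarRing R] (i : ι) :
    (single i i (1 : R)).IsHermitian := by
  simp [IsHermitian]

variable [Fintype ι]

def idealCorrelator [Semiring R] (ρ : Matrix ι ι R) : Matrix (ι × ι) (ι × ι) R :=
  ∑ i, ∑ j, (single i j 1 * ρ) ⊗ₖ single j i 1

theorem idealCorrelator_apply [Semiring R] (ρ : Matrix ι ι R) (a b c d : ι) :
    idealCorrelator ρ (a, b) (c, d) = if a = d then ρ b c else 0 := by
  have hsum : idealCorrelator ρ (a, b) (c, d) = (single d b (1 : R) * ρ) a c := by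
    simp only [idealCorrelator, sum_apply, kroneckerMap_apply, single_apply, mul_ite, mul_one,
      mul_zero]
    rw [Finset.sum_eq_single d, Finset.sum_eq_single b] <;> simp_all
  rw [hsum]
  split_ifs with had
  · simp [had]
  · exact single_mul_apply_of_ne _ _ _ _ _ had _

theorem IsHermitian.diag_eq_star_of_idealCorrelator [Semiring R] [Star R] {ρ : Matrix ι ι R}
    (h : (idealCorrelator ρ).IsHermitian) (i j : ι) : ρ i i = star (ρ j j) := by
  simpa [idealCorrelator_apply] using congr_fun₂ h.symm (j, i) (i, j)

theorem not_isHermitian_idealCorrelator_single [Semiring R] [StarRing R] [Nontrivial R]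
    {i j : ι} (hij : i ≠ j) : ¬ (idealCorrelator (single i i (1 : R))).IsHermitian :=
  fun h => by simpa [single_apply_of_row_ne hij] using h.diag_eq_star_of_idealCorrelator i j

end Matrix

theorem stmt6 {n : ℕ} (hn : 2 ≤ n) :
    ∃ ρ : Matrix (Fin n) (Fin n) ℂ, ρ.IsHermitian ∧
      ¬ (∑ i : Fin n, ∑ j : Fin n,
          (Matrix.single i j 1 * ρ) ⊗ₖ Matrix.single j i 1).IsHermitian := by
  let i : Fin n := ⟨0, by omega⟩
  let j : Fin n := ⟨1, by omega⟩
  exact ⟨single i i 1, isHermitian_single_one_self i,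
    not_isHermitian_idealCorrelator_single (i := i) (j := j) (by simp [i, j, Fin.ext_iff])⟩
end
end

section
/- For Hermitian A, B ∈ M_n(ℂ) and a density matrix ρ, the correlation function Tr[A ρ B] is real for all density matrices ρ if and only if A and B commute. -/
/-! For Hermitian `A`, `B`, `ρ` one has `Tr[AρB] - conj Tr[AρB] = Tr[ρ (BA - AB)]`, so the
correlation is real for every density matrix iff `X ↦ Tr[X (BA - AB)]` vanishes on density
matrices. After rescaling it vanishes on all positive matrices, which span `M_n(ℂ)`; as the trace
pairing is nondegenerate, `BA - AB = 0`. -/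

open Matrix Kronecker
open scoped ComplexOrder

noncomputable section

namespace Matrix

variable {n : Type*} [Fintype n]

section
open scoped Matrix.Norms.L2Operator MatrixOrder

theorem eq_zero_of_forall_posSemidef_trace_mul_eq_zero [DecidableEq n] {C : Matrix n n ℂ}
    (h : ∀ ρ : Matrix n n ℂ, ρ.PosSemidef → (ρ * C).trace = 0) : C = 0 := by
  have hf : traceLinearMap n ℂ ℂ ∘ₗ LinearMap.mulRight ℂ C = 0 :=
    LinearMap.ext_on CStarAlgebra.span_nonneg fun ρ hρ => h ρ (nonneg_iff_posSemidef.mp hρ)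
  rw [ext_iff_trace_mul_left]
  intro X
  simpa using LinearMap.congr_fun hf X

end

theorem eq_zero_of_forall_density_trace_mul_eq_zero [DecidableEq n] {C : Matrix n n ℂ}
    (h : ∀ ρ : Matrix n n ℂ, ρ.PosSemidef → ρ.trace = 1 → (ρ * C).trace = 0) : C = 0 := by
  refine eq_zero_of_forall_posSemidef_trace_mul_eq_zero fun ρ hρ => ?_
  by_cases h0 : ρ.trace = 0
  · rw [hρ.trace_eq_zero_iff.mp h0, zero_mul, trace_zero]
  · have hnorm := h (ρ.trace⁻¹ • ρ) (hρ.smul (inv_nonneg.mpr hρ.trace_nonneg))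
      (by rw [trace_smul, smul_eq_mul, inv_mul_cancel₀ h0])
    rwa [smul_mul_assoc, trace_smul, smul_eq_mul, mul_eq_zero, or_iff_right (inv_ne_zero h0)]
      at hnorm

theorem trace_mul_mul_sub_star_trace {A B ρ : Matrix n n ℂ} (hA : A.IsHermitian)
    (hB : B.IsHermitian) (hρ : ρ.IsHermitian) :
    (A * ρ * B).trace - star (A * ρ * B).trace = (ρ * (B * A - A * B)).trace := by
  rw [← trace_conjTranspose, conjTranspose_mul, conjTranspose_mul, hA.eq, hB.eq, hρ.eq,
    trace_mul_cycle, trace_mul_comm B, trace_mul_comm (B * A), mul_assoc ρ A B,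
    mul_sub, trace_sub]

theorem im_trace_mul_mul_eq_zero_iff {A B ρ : Matrix n n ℂ} (hA : A.IsHermitian)
    (hB : B.IsHermitian) (hρ : ρ.IsHermitian) :
    (A * ρ * B).trace.im = 0 ↔ (ρ * (B * A - A * B)).trace = 0 := by
  rw [← trace_mul_mul_sub_star_trace hA hB hρ]
  simp [Complex.sub_conj, Complex.I_ne_zero]

end Matrix

theorem stmt8 {n : ℕ} (A B : Matrix (Fin n) (Fin n) ℂ)
    (hA : A.IsHermitian) (hB : B.IsHermitian) :
    (∀ ρ : Matrix (Fin n) (Fin n) ℂ, ρ.PosSemidef → ρ.trace = 1 →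
      ((A * ρ * B).trace.im = 0)) ↔ A * B = B * A := by
  constructor
  · intro h
    have hcomm : B * A - A * B = 0 := eq_zero_of_forall_density_trace_mul_eq_zero
      fun ρ hρ htr => (im_trace_mul_mul_eq_zero_iff hA hB hρ.1).mp (h ρ hρ htr)
    exact (sub_eq_zero.mp hcomm).symm
  · intro hAB ρ hρ _
    rw [im_trace_mul_mul_eq_zero_iff hA hB hρ.1, hAB, sub_self, mul_zero, trace_zero]
end
end

section
/- The anticommutator map L_B(ρ) = (Bρ + ρB)/2 for Hermitian B ∈ M_n(ℂ) admits a statistical decomposition: there exist nonnegative reals λ₁, λ₂ and completely positive maps E₁, E₂ with E₁ + E₂ trace-preserving such that L_B = λ₁E₁ − λ₂E₂. -/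
open Matrix Kronecker
open scoped ComplexOrder

noncomputable section

/-! ### Auxiliary lemmas -/

lemma tensorId_kraus {n : ℕ} (M : Matrix (Fin n) (Fin n) ℂ) (k : ℕ)
    (X : Matrix (Fin k × Fin n) (Fin k × Fin n) ℂ) :
    tensorId (fun ρ => M * ρ * Mᴴ) k X
      = ((1 : Matrix (Fin k) (Fin k) ℂ) ⊗ₖ M) * X * ((1 : Matrix (Fin k) (Fin k) ℂ) ⊗ₖ M)ᴴ := by
  ext p q
  simp only [tensorId, Matrix.of_apply, Matrix.mul_apply, conjTranspose_apply,
    kroneckerMap_apply, Matrix.one_apply, Fintype.sum_prod_type, star_mul', star_one, star_zero,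
    apply_ite, ite_mul, mul_ite, one_mul, mul_one, zero_mul, mul_zero, _root_.map_zero,
    _root_.map_one, Finset.sum_ite_eq, Finset.sum_ite_eq', Finset.mem_univ, if_true]
  rw [Finset.sum_comm]
  simp only [Finset.sum_ite_eq, Finset.mem_univ, if_true]
  congr 1; funext x1
  rw [Finset.sum_comm]
  simp only [Finset.sum_ite_eq, Finset.mem_univ, if_true, Finset.sum_mul]

lemma isCP_kraus {n : ℕ} (M : Matrix (Fin n) (Fin n) ℂ) :
    IsCP (fun ρ => M * ρ * Mᴴ) := by
  intro k X hX
  rw [tensorId_kraus]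
  exact hX.mul_mul_conjTranspose_same _

lemma isCP_add {n m : ℕ} {f g : Matrix (Fin n) (Fin n) ℂ → Matrix (Fin m) (Fin m) ℂ}
    (hf : IsCP f) (hg : IsCP g) : IsCP (fun ρ => f ρ + g ρ) := by
  intro k X hX
  have h : tensorId (fun ρ => f ρ + g ρ) k X = tensorId f k X + tensorId g k X := by
    ext p q
    simp [tensorId, Matrix.add_apply]
  rw [h]
  exact (hf k X hX).add (hg k X hX)

/-- Conjugation by a fixed matrix, as a linear map. -/
def krausMap {n : ℕ} (K : Matrix (Fin n) (Fin n) ℂ) :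
    Matrix (Fin n) (Fin n) ℂ →ₗ[ℂ] Matrix (Fin n) (Fin n) ℂ where
  toFun ρ := K * ρ * Kᴴ
  map_add' ρ σ := by simp [mul_add, add_mul]
  map_smul' c ρ := by simp [Matrix.mul_smul, Matrix.smul_mul]

lemma psd_smul_one {n : ℕ} (r : ℝ) (hr : 0 ≤ r) :
    PosSemidef ((r:ℂ) • (1 : Matrix (Fin n) (Fin n) ℂ)) := by
  rw [← Matrix.diagonal_one, ← Matrix.diagonal_smul]
  exact posSemidef_diagonal_iff.mpr fun i => by simp; positivity

lemma psd_sub {n : ℕ} (H : Matrix (Fin n) (Fin n) ℂ) (hH : H.PosSemidef) :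
    PosSemidef ((((∑ i, hH.1.eigenvalues i) + 1 : ℝ):ℂ) • 1 - H) := by
  set lam : ℝ := (∑ i, hH.1.eigenvalues i) + 1 with hlam
  have hspec := hH.1.spectral_theorem
  rw [Unitary.conjStarAlgAut_apply] at hspec
  set U : Matrix (Fin n) (Fin n) ℂ :=
    (IsHermitian.eigenvectorUnitary hH.1 : Matrix (Fin n) (Fin n) ℂ) with hU
  have hUU : U * star U = 1 :=
    (Matrix.mem_unitaryGroup_iff).mp (IsHermitian.eigenvectorUnitary hH.1).2
  have key : ((lam:ℂ) • 1 - H)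
      = U * (diagonal (fun i => ((lam - hH.1.eigenvalues i : ℝ):ℂ))) * Uᴴ := by
    have hdiag : (diagonal (fun i => ((lam - hH.1.eigenvalues i : ℝ):ℂ)))
        = (lam:ℂ) • 1 - diagonal (RCLike.ofReal ∘ hH.1.eigenvalues) := by
      ext i j
      by_cases h : i = j <;>
        simp [h, Matrix.diagonal_apply, Matrix.one_apply, Matrix.sub_apply, Matrix.smul_apply]
    rw [hdiag, mul_sub, sub_mul, Matrix.mul_smul, mul_one, Matrix.smul_mul,
      ← Matrix.star_eq_conjTranspose, hUU, ← hspec]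
  rw [key]
  refine PosSemidef.mul_mul_conjTranspose_same ?_ U
  refine posSemidef_diagonal_iff.mpr fun i => ?_
  have h1 : hH.1.eigenvalues i ≤ ∑ j, hH.1.eigenvalues j :=
    Finset.single_le_sum (fun j _ => hH.eigenvalues_nonneg j) (Finset.mem_univ i)
  have h2 : (0:ℝ) ≤ lam - hH.1.eigenvalues i := by rw [hlam]; linarith
  simpa using h2

lemma matrix_div_two {n : ℕ} (X : Matrix (Fin n) (Fin n) ℂ) : X / 2 = (2:ℂ)⁻¹ • X := by
  have h1 : (2⁻¹:ℂ) • (2 : Matrix (Fin n) (Fin n) ℂ) = 1 := by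
    rw [← Matrix.diagonal_ofNat (n := Fin n) 2, ← Matrix.diagonal_smul]
    have h : ((2⁻¹:ℂ) • (fun _ : Fin n => (2:ℂ))) = fun _ => (1:ℂ) := by funext i; simp
    rw [h, Matrix.diagonal_one]
  have h2 : ((2:Matrix (Fin n) (Fin n) ℂ))⁻¹ = (2:ℂ)⁻¹ • 1 := by
    apply Matrix.inv_eq_right_inv
    rw [Matrix.mul_smul, mul_one, ← h1]
  rw [div_eq_mul_inv, h2, Matrix.mul_smul, mul_one]

theorem stmt14 {n : ℕ} (B : Matrix (Fin n) (Fin n) ℂ) (hB : B.IsHermitian) :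
    ∃ (lam1 lam2 : ℝ), 0 ≤ lam1 ∧ 0 ≤ lam2 ∧
      ∃ (E1 E2 : Matrix (Fin n) (Fin n) ℂ →ₗ[ℂ] Matrix (Fin n) (Fin n) ℂ),
        IsCP ⇑E1 ∧ IsCP ⇑E2 ∧
        (∀ X, (E1 X + E2 X).trace = X.trace) ∧
        (∀ ρ, (B * ρ + ρ * B) / 2 = (lam1 : ℂ) • E1 ρ - (lam2 : ℂ) • E2 ρ) := by
  classical
  -- the positive matrix H = B² + B + 1
  have hHpsd : (B * B + B + 1).PosSemidef := by
    have hsplit : B * B + B + 1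
        = (B + ((2⁻¹:ℝ):ℂ)•1)ᴴ * (B + ((2⁻¹:ℝ):ℂ)•1) + (((3:ℝ)/4:ℝ):ℂ)•1 := by
      rw [conjTranspose_add, hB.eq, conjTranspose_smul, conjTranspose_one]
      simp only [mul_add, add_mul, smul_mul_assoc, Matrix.mul_smul, mul_one, one_mul, smul_smul,
        Complex.star_def, Complex.conj_ofReal]
      match_scalars <;> ring
    rw [hsplit]
    exact (posSemidef_conjTranspose_mul_self _).add (psd_smul_one _ (by norm_num))
  set lam : ℝ := (∑ i, hHpsd.1.eigenvalues i) + 1 with hlamdef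
  have hlampos : 0 < lam := by
    have h0 : (0:ℝ) ≤ ∑ i, hHpsd.1.eigenvalues i :=
      Finset.sum_nonneg fun i _ => hHpsd.eigenvalues_nonneg i
    rw [hlamdef]; linarith
  have hA : ((lam:ℂ) • 1 - (B * B + B + 1)).PosSemidef := psd_sub _ hHpsd
  set A : Matrix (Fin n) (Fin n) ℂ := (lam:ℂ) • 1 - (B * B + B + 1) with hAdef
  set T : Matrix (Fin n) (Fin n) ℂ := (open scoped MatrixOrder in CFC.sqrt A) with hTdef
  have hTT : T * T = A := by open scoped MatrixOrder in exact CFC.sqrt_mul_sqrt_self A hA.nonneg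
  have hTh : Tᴴ = T := by open scoped MatrixOrder in exact (CFC.sqrt_nonneg A).posSemidef.1
  set a : ℝ := Real.sqrt (1/(2*lam)) with hadef
  have haa : (a:ℂ) * (a:ℂ) * (2*(lam:ℂ)) = 1 := by
    have h1 : a * a = 1/(2*lam) := Real.mul_self_sqrt (by positivity)
    have h2 : (lam:ℂ) ≠ 0 := by exact_mod_cast hlampos.ne'
    have h3 : (a:ℂ) * (a:ℂ) = ((1/(2*lam):ℝ):ℂ) := by
      rw [← Complex.ofReal_mul, h1]
    rw [h3]
    push_cast
    field_simp
  -- the Kraus operators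
  set K1 : Matrix (Fin n) (Fin n) ℂ := (a:ℂ) • (B + 1) with hK1
  set K2 : Matrix (Fin n) (Fin n) ℂ := (a:ℂ) • B with hK2
  set K3 : Matrix (Fin n) (Fin n) ℂ := (a:ℂ) • T with hK3
  set K4 : Matrix (Fin n) (Fin n) ℂ := (a:ℂ) • 1 with hK4
  refine ⟨lam, lam, hlampos.le, hlampos.le,
    krausMap K1 + krausMap K3, krausMap K2 + krausMap K4 + krausMap K3, ?_, ?_, ?_, ?_⟩
  · have h : ⇑(krausMap K1 + krausMap K3)
        = fun ρ => (K1 * ρ * K1ᴴ) + (K3 * ρ * K3ᴴ) := rfl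
    rw [h]
    exact isCP_add (isCP_kraus _) (isCP_kraus _)
  · have h : ⇑(krausMap K2 + krausMap K4 + krausMap K3)
        = fun ρ => ((K2 * ρ * K2ᴴ) + (K4 * ρ * K4ᴴ)) + (K3 * ρ * K3ᴴ) := rfl
    rw [h]
    exact isCP_add (isCP_add (isCP_kraus _) (isCP_kraus _)) (isCP_kraus _)
  · intro X
    have hsum : (K1ᴴ * K1 + K3ᴴ * K3) + ((K2ᴴ * K2 + K4ᴴ * K4) + K3ᴴ * K3) = 1 := by
      simp only [hK1, hK2, hK3, hK4, conjTranspose_smul, conjTranspose_add, conjTranspose_one,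
        hB.eq, hTh, Complex.star_def, Complex.conj_ofReal, smul_mul_assoc, Matrix.mul_smul,
        smul_smul]
      rw [hTT, hAdef]
      simp only [mul_add, add_mul, one_mul, mul_one]
      match_scalars <;> first
        | ring1
        | linear_combination haa
    have hexp : (krausMap K1 + krausMap K3) X + (krausMap K2 + krausMap K4 + krausMap K3) X
        = K1 * X * K1ᴴ + K3 * X * K3ᴴ + (K2 * X * K2ᴴ + K4 * X * K4ᴴ + K3 * X * K3ᴴ) := rfl
    have hcyc : ∀ (K Y : Matrix (Fin n) (Fin n) ℂ),
        (K * Y * Kᴴ).trace = ((Kᴴ * K) * Y).trace := fun K Y => Matrix.trace_mul_cycle K Y Kᴴ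
    rw [hexp]
    conv_rhs => rw [← one_mul X, ← hsum]
    simp only [Matrix.add_mul, Matrix.trace_add, hcyc]
  · intro ρ
    rw [matrix_div_two]
    show (2⁻¹:ℂ) • (B * ρ + ρ * B)
        = (lam:ℂ) • (K1 * ρ * K1ᴴ + K3 * ρ * K3ᴴ)
          - (lam:ℂ) • ((K2 * ρ * K2ᴴ + K4 * ρ * K4ᴴ) + K3 * ρ * K3ᴴ)
    simp only [hK1, hK2, hK3, hK4, conjTranspose_smul, conjTranspose_add, conjTranspose_one,
      hB.eq, hTh, Complex.star_def, Complex.conj_ofReal, smul_mul_assoc, Matrix.mul_smul,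
      smul_smul, mul_add, add_mul, one_mul, mul_one]
    match_scalars <;> first
      | ring1
      | linear_combination haa
      | linear_combination haa/2
      | linear_combination -haa
      | linear_combination -haa/2
end
end
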